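/- arXiv:1610.01560 — 3 statements merged into one kernel-verified Lean document; each statement's English description precedes it below -/
import Mathlib

section
/- If the incidence graph between a finite set P of m points and a finite set C of n curves contains no complete bipartite subgraph K_{k,μ+1} (i.e., no k points all lying on μ+1 common curves), then the number of incidences I(P,C) is at most c·(m·n^{1-1/k} + n) for a constant c depending only on k and μ. -/
/-!
Each curve `γ` through `d γ` points contains `(d γ).choose k` of the `k`-subsets of `P`, and each
`k`-subset lies on at most `μ` curves, so `∑ γ, (d γ).choose k ≤ μ * m.choose k`. Since
`(d + 1 - k) ^ k ≤ k! * d.choose k`, the shifted degrees `x γ = d γ + 1 - k` have `k`-th power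
sum at most `μ * m ^ k`, and the power mean inequality
`(∑ γ, x γ) ^ k ≤ n ^ (k - 1) * ∑ γ, x γ ^ k` gives `∑ γ, x γ ≤ μ ^ (1/k) * m * n ^ (1 - 1/k)`.
Finally, the number of incidences is `∑ γ, d γ ≤ ∑ γ, x γ + (k - 1) * n`.
-/

open Finset

theorem le_add_one_mul_of_pow_le_mul_pow {R : Type*} [CommSemiring R] [LinearOrder R]
    [IsStrictOrderedRing R] {x y μ : R} {k : ℕ} (hk : k ≠ 0) (hy : 0 ≤ y)
    (hμ : 0 ≤ μ) (h : x ^ k ≤ μ * y ^ k) : x ≤ (μ + 1) * y := by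
  refine le_of_pow_le_pow_left₀ hk (by positivity) (h.trans ?_)
  rw [mul_pow]
  gcongr
  calc μ ≤ μ + 1 := le_add_of_nonneg_right zero_le_one
    _ ≤ (μ + 1) ^ k := le_self_pow₀ (le_add_of_nonneg_left hμ) hk

theorem Real.rpow_one_sub_inv_pow {x : ℝ} (hx : 0 ≤ x) {k : ℕ} (hk : 1 ≤ k) :
    (x ^ (1 - 1 / (k : ℝ))) ^ k = x ^ (k - 1) := by
  rw [← Real.rpow_natCast, ← Real.rpow_mul hx, ← Real.rpow_natCast, Nat.cast_sub hk]
  congr 1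
  field_simp
  simp

section Incidence

variable {α β : Type*} [Fintype α] [Fintype β] (r : α → β → Prop) [DecidableRel r]
  {k μ : ℕ}

theorem card_filter_prod_eq_sum_card_filter :
    #{p : α × β | r p.1 p.2} = ∑ b, #{a | r a b} := by
  simp only [card_filter, Fintype.sum_prod_type_right]

theorem sum_choose_card_filter_le
    (hr : ∀ s : Finset α, #s = k → #{b | ∀ a ∈ s, r a b} ≤ μ) :
    ∑ b, (#{a | r a b}).choose k ≤ μ * (Fintype.card α).choose k := by
  have hchoose (b : β) :
      (#{a | r a b}).choose k = #{s ∈ powersetCard k univ | ∀ a ∈ s, r a b} := by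
    rw [← card_powersetCard]
    congr 1
    ext s
    simp [subset_iff, and_comm]
  calc ∑ b, (#{a | r a b}).choose k
      = ∑ s ∈ powersetCard k univ, #{b | ∀ a ∈ s, r a b} := by
        simp_rw [hchoose, card_filter]
        exact sum_comm
    _ ≤ ∑ _s ∈ powersetCard k (univ : Finset α), μ :=
        sum_le_sum fun s hs => hr s (mem_powersetCard.1 hs).2
    _ = μ * (Fintype.card α).choose k := by simp [mul_comm]

theorem sum_pow_card_filter_add_one_sub_le
    (hr : ∀ s : Finset α, #s = k → #{b | ∀ a ∈ s, r a b} ≤ μ) :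
    ∑ b, (#{a | r a b} + 1 - k) ^ k ≤ μ * Fintype.card α ^ k :=
  calc ∑ b, (#{a | r a b} + 1 - k) ^ k
      ≤ ∑ b, k.factorial * (#{a | r a b}).choose k :=
        sum_le_sum fun b _ => (Nat.pow_sub_le_descFactorial _ k).trans
          (Nat.descFactorial_eq_factorial_mul_choose _ _).le
    _ ≤ k.factorial * (μ * (Fintype.card α).choose k) := by
        rw [← mul_sum]
        exact Nat.mul_le_mul_left _ (sum_choose_card_filter_le r hr)
    _ = μ * (Fintype.card α).descFactorial k := by
        rw [Nat.descFactorial_eq_factorial_mul_choose]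
        ring
    _ ≤ μ * Fintype.card α ^ k := Nat.mul_le_mul_left _ (Nat.descFactorial_le_pow _ _)

theorem card_filter_prod_le (hk : 1 ≤ k)
    (hr : ∀ s : Finset α, #s = k → #{b | ∀ a ∈ s, r a b} ≤ μ) :
    (#{p : α × β | r p.1 p.2} : ℝ) ≤
      (μ + k) * (Fintype.card α * Fintype.card β ^ (1 - 1 / (k : ℝ)) + Fintype.card β) := by
  set m := Fintype.card α
  set n := Fintype.card β
  set y : ℝ := m * n ^ (1 - 1 / (k : ℝ))
  set x : β → ℕ := fun b => #{a | r a b} + 1 - k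
  have hpow : (∑ b, x b) ^ k ≤ μ * m ^ k * n ^ (k - 1) := by
    obtain ⟨j, rfl⟩ : ∃ j, k = j + 1 := ⟨k - 1, by omega⟩
    calc (∑ b, x b) ^ (j + 1) ≤ n ^ j * ∑ b, x b ^ (j + 1) :=
          pow_sum_le_card_mul_sum_pow (fun _ _ => Nat.zero_le _) j
      _ ≤ n ^ j * (μ * m ^ (j + 1)) :=
          Nat.mul_le_mul_left _ (sum_pow_card_filter_add_one_sub_le r hr)
      _ = μ * m ^ (j + 1) * n ^ (j + 1 - 1) := by simp [mul_comm]
  have hsum : (∑ b, x b : ℝ) ≤ (μ + 1) * y := by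
    refine le_add_one_mul_of_pow_le_mul_pow (Nat.one_le_iff_ne_zero.mp hk) (by positivity)
      (by positivity) ?_
    rw [mul_pow, Real.rpow_one_sub_inv_pow (Nat.cast_nonneg n) hk, ← mul_assoc]
    exact_mod_cast hpow
  have hcount : #{p : α × β | r p.1 p.2} + n ≤ ∑ b, x b + k * n := by
    calc #{p : α × β | r p.1 p.2} + n = ∑ b, (#{a | r a b} + 1) := by
          rw [card_filter_prod_eq_sum_card_filter, sum_add_distrib, sum_const, card_univ,
            smul_eq_mul, mul_one]
      _ ≤ ∑ b, (x b + k) := sum_le_sum fun b _ => by simp only [x]; omega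
      _ = ∑ b, x b + k * n := by rw [sum_add_distrib, sum_const, card_univ, smul_eq_mul, mul_comm]
  have hy : 0 ≤ y := by positivity
  have hk' : (1 : ℝ) ≤ k := by exact_mod_cast hk
  have hcount' : (#{p : α × β | r p.1 p.2} : ℝ) + n ≤ ∑ b, (x b : ℝ) + k * n := by
    exact_mod_cast hcount
  nlinarith [mul_nonneg (sub_nonneg.2 hk') hy, 
    mul_nonneg (Nat.cast_nonneg (α := ℝ) μ) (Nat.cast_nonneg (α := ℝ) n)]

end Incidence

/-- Kővári–Sós–Turán incidence bound: if no `k` points lie on `μ+1` common curves,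
then the number of incidences is at most `c·(m·n^{1-1/k} + n)` for a constant `c`
depending only on `k` and `μ`. -/
theorem stmt0 (k μ : ℕ) (hk : 1 ≤ k) :
    ∃ c : ℝ, 0 < c ∧
      ∀ (m n : ℕ) (Inc : Fin m → Fin n → Prop)
        [DecidablePred fun pc : Fin m × Fin n => Inc pc.1 pc.2]
        [∀ p, DecidablePred (Inc p)],
        (∀ s : Finset (Fin m), s.card = k →
          (Finset.univ.filter (fun γ : Fin n => ∀ p ∈ s, Inc p γ)).card ≤ μ) →
        ((Finset.univ.filter (fun pc : Fin m × Fin n => Inc pc.1 pc.2)).card : ℝ)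
          ≤ c * ((m : ℝ) * (n : ℝ) ^ (1 - 1 / (k : ℝ)) + (n : ℝ)) := by
  refine ⟨μ + k, by norm_cast; omega, fun m n Inc _ _ hInc => ?_⟩
  convert card_filter_prod_le Inc hk fun s hs => (by convert hInc s hs) <;> simp
end

section
/- Let P₁ and P₂ be finite sets in ℝ³ and consider the unit spheres centered at the points of P₂. The incidence graph between P₁ and these unit spheres contains no K_{3,3}: no three points lie on three common unit spheres. -/
/-!
If every point of `P` is at distance `1` from every point of `Q`, then for `p, p' ∈ P` and
`q, q' ∈ Q` both `q` and `q'` lie on the perpendicular bisector of `p p'`, so `p - p' ⟂ q - q'`: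
the direction spaces of the affine spans of `P` and `Q` are orthogonal.
Three distinct points on a sphere are affinely independent, so three points of `P` (all on the
unit sphere about a point of `Q`) span a plane, and likewise for `Q`. Two orthogonal planes do
not fit in `ℝ³`.
-/

open EuclideanGeometry

theorem Submodule.IsOrtho.finrank_add_le {𝕜 E : Type*} [RCLike 𝕜] [NormedAddCommGroup E]
    [InnerProductSpace 𝕜 E] [FiniteDimensional 𝕜 E] {U V : Submodule 𝕜 E} (h : U ⟂ V) :
    Module.finrank 𝕜 U + Module.finrank 𝕜 V ≤ Module.finrank 𝕜 E := by
  calc Module.finrank 𝕜 U + Module.finrank 𝕜 V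
      ≤ Module.finrank 𝕜 Vᗮ + Module.finrank 𝕜 V := by
        gcongr; exact Submodule.finrank_mono (Submodule.isOrtho_iff_le.1 h)
    _ = Module.finrank 𝕜 E := by rw [add_comm, V.finrank_add_finrank_orthogonal]

section

variable {V P : Type*} [NormedAddCommGroup V] [InnerProductSpace ℝ V] [MetricSpace P]
  [NormedAddTorsor V P]

theorem isOrtho_vectorSpan_of_forall_dist_eq {s t : Set P} {r : ℝ}
    (h : ∀ p ∈ s, ∀ q ∈ t, dist p q = r) : vectorSpan ℝ s ⟂ vectorSpan ℝ t := by
  rw [vectorSpan_def, vectorSpan_def, Submodule.isOrtho_span]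
  rintro _ ⟨p, hp, p', hp', rfl⟩ _ ⟨q, hq, q', hq', rfl⟩
  rw [real_inner_comm]
  exact inner_vsub_vsub_of_dist_eq_of_dist_eq (by rw [h p' hp' q' hq', h p hp q' hq'])
    (by rw [h p' hp' q hq, h p hp q hq])

theorem EuclideanGeometry.Cospherical.finrank_vectorSpan_eq_two {p₁ p₂ p₃ : P}
    (hs : Cospherical ({p₁, p₂, p₃} : Set P)) (h₁₂ : p₁ ≠ p₂) (h₁₃ : p₁ ≠ p₃) (h₂₃ : p₂ ≠ p₃) :
    Module.finrank ℝ (vectorSpan ℝ ({p₁, p₂, p₃} : Set P)) = 2 := by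
  have hrange : Set.range ![p₁, p₂, p₃] = {p₁, p₂, p₃} := by
    rw [Matrix.range_cons, Matrix.range_cons_cons_empty, Set.singleton_union]
  rw [← hrange]
  exact (hs.affineIndependent_of_ne h₁₂ h₁₃ h₂₃).finrank_vectorSpan (by simp)

end

/-- The incidence graph between points and unit spheres in `ℝ³` contains no `K_{3,3}`:
there are no three distinct points and three distinct unit-sphere centers with every
point at distance `1` from every center. -/
theorem stmt11 (p₁ p₂ p₃ q₁ q₂ q₃ : EuclideanSpace ℝ (Fin 3))
    (hp12 : p₁ ≠ p₂) (hp13 : p₁ ≠ p₃) (hp23 : p₂ ≠ p₃)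
    (hq12 : q₁ ≠ q₂) (hq13 : q₁ ≠ q₃) (hq23 : q₂ ≠ q₃) :
    ¬ (∀ p ∈ ({p₁, p₂, p₃} : Set (EuclideanSpace ℝ (Fin 3))),
        ∀ q ∈ ({q₁, q₂, q₃} : Set (EuclideanSpace ℝ (Fin 3))), dist p q = 1) := by
  intro h
  have hP : Cospherical ({p₁, p₂, p₃} : Set (EuclideanSpace ℝ (Fin 3))) :=
    ⟨q₁, 1, fun p hp => h p hp q₁ (by simp)⟩
  have hQ : Cospherical ({q₁, q₂, q₃} : Set (EuclideanSpace ℝ (Fin 3))) :=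
    ⟨p₁, 1, fun q hq => by rw [dist_comm]; exact h p₁ (by simp) q hq⟩
  have := (isOrtho_vectorSpan_of_forall_dist_eq h).finrank_add_le
  rw [hP.finrank_vectorSpan_eq_two hp12 hp13 hp23, hQ.finrank_vectorSpan_eq_two hq12 hq13 hq23,
    finrank_euclideanSpace_fin] at this
  omega
end

section
/- Suppose an incidence-counting function satisfies the recursive scheme: J(m,n) ≤ a·D³·J(b₀m/D³, bn/D) + B·(m^{2s/(5s−4)}n^{(5s−6)/(5s−4)+ε} + m^{2/3}n^{2/3} + m + n) for fixed constants a, b₀, b, B, s ≥ 2, ε > 0 and any choice of D ≥ 1, together with the base bound J(m,n) ≤ B·n for m ≤ n^{1/s}. Then J(m,n) ≤ A·(m^{2s/(3s−1)}n^{(3s−3)/(3s−1)+ε} + m + n) for a suitable constant A (depending on a, b₀, b, B, s, ε), for all m, n with n^{1/s} ≤ m ≤ n³ and n sufficiently large. -/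
/-!
A single partitioning step already closes the recursion. Take
`D ≈ (b₀m / (bn)^{1/s})^{s/(3s-1)}` (at least `1`), so that `b₀m/D³ ≤ (bn/D)^{1/s}`:
every cell is then a base case, contributing at most `aD³ · B·bn/D = abB·nD²`, and
`nD² ≲ n + m^{2s/(3s-1)} n^{(3s-3)/(3s-1)}`. For `m ≥ n^{1/s}` both boundary terms are
dominated by `m^{2s/(3s-1)} n^{(3s-3)/(3s-1)+ε}`, since raising the exponent of `m` by `δ`
pays for lowering that of `n` by `δ/s`.
-/

open Real

lemma rpow_mul_rpow_le_rpow_mul_rpow {m n t p q p' q' : ℝ} (hn : 1 ≤ n)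
    (hm : n ^ (1 / t) ≤ m) (hp : p ≤ p') (hq : q ≤ q' + (p' - p) / t) :
    m ^ p * n ^ q ≤ m ^ p' * n ^ q' := by
  have hn0 : 0 < n := one_pos.trans_le hn
  have hm0 : 0 < m := (rpow_pos_of_pos hn0 _).trans_le hm
  have key : n ^ (q - q') ≤ m ^ (p' - p) :=
    calc n ^ (q - q') ≤ n ^ ((p' - p) / t) := rpow_le_rpow_of_exponent_le hn (by linarith)
      _ = (n ^ (1 / t)) ^ (p' - p) := by rw [← rpow_mul hn0.le, one_div_mul_eq_div]
      _ ≤ m ^ (p' - p) := rpow_le_rpow (by positivity) hm (by linarith)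
  calc m ^ p * n ^ q = m ^ p * n ^ (q - q') * n ^ q' := by
        rw [mul_assoc, ← rpow_add hn0, sub_add_cancel]
    _ ≤ m ^ p * m ^ (p' - p) * n ^ q' := by gcongr
    _ = m ^ p' * n ^ q' := by rw [← rpow_add hm0, add_sub_cancel]

lemma div_rpow_le_div_rpow {P c D r u : ℝ} (hc : 0 ≤ c) (hD : 0 < D)
    (h : P ≤ D ^ (r - u) * c ^ u) : P / D ^ r ≤ (c / D) ^ u := by
  rw [div_rpow hc hD.le, rpow_sub hD] at *
  calc P / D ^ r ≤ D ^ r / D ^ u * c ^ u / D ^ r := by gcongr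
    _ = c ^ u / D ^ u := by field_simp

lemma le_max_one_rpow_rpow_inv {y σ : ℝ} (hy : 0 ≤ y) (hσ : 0 < σ) :
    y ≤ (max 1 (y ^ σ)) ^ σ⁻¹ :=
  calc y = (y ^ σ) ^ σ⁻¹ := (rpow_rpow_inv hy hσ.ne').symm
    _ ≤ _ := rpow_le_rpow (by positivity) (le_max_right _ _) (inv_nonneg.2 hσ.le)

noncomputable def leadingTerm (t ε m n : ℝ) : ℝ :=
  m ^ (2 * t / (3 * t - 1)) * n ^ ((3 * t - 3) / (3 * t - 1) + ε)

section Exponents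

variable {t ε m n : ℝ} (ht : 2 ≤ t) (hn : 1 ≤ n) (hm : n ^ (1 / t) ≤ m)
include ht hn hm

lemma partition_boundary_le_leadingTerm :
    m ^ (2 * t / (5 * t - 4)) * n ^ ((5 * t - 6) / (5 * t - 4) + ε) ≤ leadingTerm t ε m n := by
  apply rpow_mul_rpow_le_rpow_mul_rpow hn hm
  · rw [div_le_div_iff₀ (by linarith) (by linarith)]; nlinarith
  · have : (3 * t - 3) / (3 * t - 1) + (2 * t / (3 * t - 1) - 2 * t / (5 * t - 4)) / t
        = (5 * t - 6) / (5 * t - 4) := by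
      have : t * 5 - 4 ≠ 0 := by linarith
      have : 3 * t - 1 ≠ 0 := by linarith
      have : t ≠ 0 := by linarith
      field_simp; ring
    linarith

lemma szemeredi_trotter_le_leadingTerm (hε : 0 ≤ ε) :
    m ^ ((2 : ℝ) / 3) * n ^ ((2 : ℝ) / 3) ≤ leadingTerm t ε m n := by
  apply rpow_mul_rpow_le_rpow_mul_rpow hn hm
  · rw [div_le_div_iff₀ (by norm_num) (by linarith)]; nlinarith
  · have : (3 * t - 3) / (3 * t - 1) + (2 * t / (3 * t - 1) - 2 / 3) / t
        = 2 / 3 + (t - 2) / (3 * t) := by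
      have : 3 * t - 1 ≠ 0 := by linarith
      have : t ≠ 0 := by linarith
      field_simp; ring
    have : 0 ≤ (t - 2) / (3 * t) := div_nonneg (by linarith) (by linarith)
    linarith

end Exponents

/-- Chosen so that `D^{3 - 1/t} ≥ b₀m / (bn)^{1/t}`: then every cell, with at most `b₀m/D³`
points and `bn/D` surfaces, already falls under the base bound. -/
noncomputable def partitionDegree (b₀ b t m n : ℝ) : ℝ :=
  max 1 ((b₀ * m / (b * n) ^ (1 / t)) ^ (t / (3 * t - 1)))

section PartitionDegree

variable {b₀ b t m n : ℝ} (hb₀ : 0 ≤ b₀) (hb : 0 < b) (hm : 0 ≤ m) (ht : 1 / 3 < t)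
include hb₀ hb hm ht

lemma cell_le_of_partitionDegree (hn : 0 < n) :
    b₀ * m / partitionDegree b₀ b t m n ^ 3 ≤
      (b * n / partitionDegree b₀ b t m n) ^ (1 / t) := by
  have hbn : 0 < b * n := by positivity
  have hσ : 0 < t / (3 * t - 1) := div_pos (by linarith) (by linarith)
  have hexp : (3 : ℝ) - 1 / t = (t / (3 * t - 1))⁻¹ := by
    have : t ≠ 0 := by linarith
    field_simp
  rw [← rpow_natCast, Nat.cast_ofNat]
  apply div_rpow_le_div_rpow hbn.le (one_pos.trans_le (le_max_left _ _))
  calc b₀ * m = b₀ * m / (b * n) ^ (1 / t) * (b * n) ^ (1 / t) := by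
        rw [div_mul_cancel₀ _ (by positivity)]
    _ ≤ _ := by
        rw [hexp]
        gcongr
        exact le_max_one_rpow_rpow_inv (by positivity) hσ

lemma mul_partitionDegree_sq_le {ε : ℝ} (hε : 0 ≤ ε) (hn : 1 ≤ n) :
    n * partitionDegree b₀ b t m n ^ 2 ≤
      n + b₀ ^ (2 * t / (3 * t - 1)) / b ^ (2 / (3 * t - 1)) * leadingTerm t ε m n := by
  have hn0 : 0 < n := one_pos.trans_le hn
  set y := b₀ * m / (b * n) ^ (1 / t)
  have hy : 0 ≤ y := by positivity
  have hsq : partitionDegree b₀ b t m n ^ 2 ≤ 1 + y ^ (2 * t / (3 * t - 1)) := by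
    rw [show 2 * t / (3 * t - 1) = t / (3 * t - 1) * (2 : ℕ) by push_cast; ring,
      rpow_mul_natCast hy]
    unfold partitionDegree
    rcases max_cases 1 (y ^ (t / (3 * t - 1))) with ⟨h, -⟩ | ⟨h, -⟩ <;> rw [h] <;> nlinarith
  have hcell : n * y ^ (2 * t / (3 * t - 1)) =
      b₀ ^ (2 * t / (3 * t - 1)) / b ^ (2 / (3 * t - 1)) *
        (m ^ (2 * t / (3 * t - 1)) * n ^ ((3 * t - 3) / (3 * t - 1))) := by
    have h1 : ((b * n) ^ (1 / t)) ^ (2 * t / (3 * t - 1)) =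
        b ^ (2 / (3 * t - 1)) * n ^ (2 / (3 * t - 1)) := by
      rw [← rpow_mul (by positivity), mul_rpow hb.le hn0.le]
      congr 2 <;> field_simp
    have h2 : (3 * t - 3) / (3 * t - 1) = 1 - 2 / (3 * t - 1) := by
      rw [eq_sub_iff_add_eq, ← add_div, div_eq_one_iff_eq (by linarith)]
      ring
    rw [div_rpow (by positivity) (by positivity), mul_rpow hb₀ hm, h1, h2, rpow_sub hn0, rpow_one]
    field_simp
  calc n * partitionDegree b₀ b t m n ^ 2 ≤ n * (1 + y ^ (2 * t / (3 * t - 1))) := by gcongr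
    _ = n + n * y ^ (2 * t / (3 * t - 1)) := by ring
    _ ≤ _ := by
        rw [hcell, leadingTerm]
        gcongr
        linarith

end PartitionDegree

/-- Closing the recursion of Theorem 1.12: if `J` satisfies the base bound
`J(m,n) ≤ B·n` for `m ≤ n^{1/s}` and the partitioning recursion
`J(m,n) ≤ a·D³·J(b₀m/D³, bn/D) + B(m^{2s/(5s−4)}n^{(5s−6)/(5s−4)+ε} + m^{2/3}n^{2/3} + m + n)`
for every `D ≥ 1`, then `J(m,n) ≤ A(m^{2s/(3s−1)}n^{(3s−3)/(3s−1)+ε} + m + n)` for a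
suitable constant `A`, whenever `n^{1/s} ≤ m ≤ n³` and `n` is sufficiently large. -/
theorem stmt14 (a b₀ b B ε : ℝ) (s : ℕ) (ha : 0 < a) (hb₀ : 0 < b₀) (hb : 0 < b)
    (hB : 0 < B) (hε : 0 < ε) (hs : 2 ≤ s) :
    ∃ A : ℝ, 0 < A ∧ ∃ N : ℝ, ∀ J : ℝ → ℝ → ℝ,
      (∀ m n : ℝ, 0 ≤ J m n) →
      (∀ m n : ℝ, 0 < m → 0 < n → m ≤ n ^ (1 / (s : ℝ)) → J m n ≤ B * n) →
      (∀ m n D : ℝ, 0 < m → 0 < n → 1 ≤ D →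
        J m n ≤ a * D ^ 3 * J (b₀ * m / D ^ 3) (b * n / D) +
          B * (m ^ (2 * (s : ℝ) / (5 * (s : ℝ) - 4)) *
                n ^ ((5 * (s : ℝ) - 6) / (5 * (s : ℝ) - 4) + ε) +
              m ^ ((2 : ℝ) / 3) * n ^ ((2 : ℝ) / 3) + m + n)) →
      ∀ m n : ℝ, N ≤ n → n ^ (1 / (s : ℝ)) ≤ m → m ≤ n ^ (3 : ℝ) →
        J m n ≤ A * (m ^ (2 * (s : ℝ) / (3 * (s : ℝ) - 1)) *
            n ^ ((3 * (s : ℝ) - 3) / (3 * (s : ℝ) - 1) + ε) + m + n) := by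
  set t : ℝ := (s : ℝ)
  have ht : (2 : ℝ) ≤ t := Nat.ofNat_le_cast.mpr hs
  set C₀ := b₀ ^ (2 * t / (3 * t - 1)) / b ^ (2 / (3 * t - 1))
  refine ⟨a * b * B * (1 + C₀) + 2 * B, by positivity, 1,
    fun J _ hbase hrec m n hn hm _ => ?_⟩
  have hn0 : 0 < n := by linarith
  have hm0 : 0 < m := (rpow_pos_of_pos hn0 _).trans_le hm
  set D := partitionDegree b₀ b t m n
  set L := leadingTerm t ε m n
  have hD : 1 ≤ D := le_max_left _ _
  have hcell : J (b₀ * m / D ^ 3) (b * n / D) ≤ B * (b * n / D) := hbase _ _ (by positivity)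
    (by positivity) (cell_le_of_partitionDegree hb₀.le hb hm0.le (by linarith) hn0)
  have hL₁ : m ^ (2 * t / (5 * t - 4)) * n ^ ((5 * t - 6) / (5 * t - 4) + ε) ≤ L :=
    partition_boundary_le_leadingTerm ht hn hm
  have hL₂ : m ^ ((2 : ℝ) / 3) * n ^ ((2 : ℝ) / 3) ≤ L :=
    szemeredi_trotter_le_leadingTerm ht hn hm hε.le
  have hnD : n * D ^ 2 ≤ n + C₀ * L :=
    mul_partitionDegree_sq_le hb₀.le hb hm0.le (by linarith) hε.le hn
  calc J m n ≤ a * D ^ 3 * (B * (b * n / D)) + B * (L + L + m + n) := by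
        grw [hrec m n D hm0 hn0 hD, hcell, hL₁, hL₂]
    _ = a * b * B * (n * D ^ 2) + B * (2 * L + m + n) := by field_simp; ring
    _ ≤ a * b * B * (n + C₀ * L) + B * (2 * L + m + n) := by gcongr
    _ ≤ (a * b * B * (1 + C₀) + 2 * B) * (L + m + n) := by
        have hL : 0 ≤ L := by unfold L leadingTerm; positivity
        have habB : 0 ≤ a * b * B := by positivity
        have hC₀ : 0 ≤ a * b * B * C₀ := by positivity
        linarith [mul_nonneg habB hL, mul_nonneg habB hm0.le, mul_nonneg hC₀ hm0.le,
          mul_nonneg hC₀ hn0.le, mul_nonneg hB.le hm0.le, mul_nonneg hB.le hn0.le]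
end
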